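/- (Polarization is a smoothing transformation) Let H ⊂ ℝⁿ be a hyperplane through the origin with reflection σ, H⁺ a chosen closed half-space, and let A ⊂ ℝⁿ. Then for every r > 0, A^σ + r·𝔹ⁿ ⊆ (A + r·𝔹ⁿ)^σ, where A^σ denotes the polarization of A with respect to H and 𝔹ⁿ is the closed unit ball. -/

import Mathlib

open MeasureTheory Metric Set Pointwise

noncomputable section

/-- Reflection across the hyperplane through the origin with unit normal `u`. -/
def reflHyp {n : ℕ} (u x : EuclideanSpace ℝ (Fin n)) : EuclideanSpace ℝ (Fin n) :=
  x - (2 * (inner ℝ x u : ℝ)) • u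

/-- The polarization of a set `A` with respect to the hyperplane with unit normal `u`
(the chosen half-space being `H⁺ = {x | ⟪x,u⟫ ≥ 0}`):
`A^σ = ((A ∪ σA) ∩ H⁺) ∪ ((A ∩ σA) ∩ H⁻)`. -/
def polarSet {n : ℕ} (u : EuclideanSpace ℝ (Fin n))
    (A : Set (EuclideanSpace ℝ (Fin n))) : Set (EuclideanSpace ℝ (Fin n)) :=
  ((A ∪ reflHyp u '' A) ∩ {x | 0 ≤ (inner ℝ x u : ℝ)}) ∪
    ((A ∩ reflHyp u '' A) ∩ {x | (inner ℝ x u : ℝ) ≤ 0})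

/-! A point `z` within `r` of some `x ∈ A^σ` lies in `B ∪ σB`, where `B = A + r𝔹ⁿ`,
because `A^σ ⊆ A ∪ σA` and `σ` is an isometry. If moreover `z ∈ H⁻`, we need `z, σz ∈ B`. This is
clear when `x, σx ∈ A`; otherwise `x ∈ H⁺`, and for points `x, z` on opposite sides of `H`
reflecting `z` only brings it closer: `‖σz - x‖² = ‖z - x‖² + 4⟪z,u⟫⟪x,u⟫ ≤ ‖z - x‖²`. So `z` and
`σz` are both within `r` of whichever of `x`, `σx` lies in `A`. -/

theorem mem_add_closedBall_zero_of_dist_le {E : Type*} [SeminormedAddCommGroup E] {A : Set E}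
    {a z : E} {r : ℝ} (ha : a ∈ A) (h : dist z a ≤ r) : z ∈ A + closedBall 0 r :=
  ⟨a, ha, z - a, by rwa [mem_closedBall_zero_iff, ← dist_eq_norm], add_sub_cancel a z⟩

namespace reflHyp

variable {n : ℕ} {u : EuclideanSpace ℝ (Fin n)}

theorem inner_apply (hu : ‖u‖ = 1) (x : EuclideanSpace ℝ (Fin n)) :
    (inner ℝ (reflHyp u x) u : ℝ) = -inner ℝ x u := by
  rw [reflHyp, inner_sub_left, inner_smul_left, real_inner_self_eq_norm_sq, hu]
  simp only [RCLike.conj_to_real]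
  ring

theorem involutive (hu : ‖u‖ = 1) : Function.Involutive (reflHyp u) := fun x => by
  rw [reflHyp, inner_apply hu, reflHyp]
  module

theorem norm_sub_sq (hu : ‖u‖ = 1) (z x : EuclideanSpace ℝ (Fin n)) :
    ‖reflHyp u z - x‖ ^ 2 = ‖z - x‖ ^ 2 + 4 * inner ℝ z u * inner ℝ x u := by
  rw [reflHyp, sub_right_comm, norm_sub_sq_real, inner_smul_right, inner_sub_left, norm_smul, hu,
    mul_one, Real.norm_eq_abs, sq_abs]
  ring

theorem dist_apply_apply (hu : ‖u‖ = 1) (x y : EuclideanSpace ℝ (Fin n)) :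
    dist (reflHyp u x) (reflHyp u y) = dist x y := by
  have hx := norm_sub_sq hu x (reflHyp u y)
  have hy := norm_sub_sq hu y x
  rw [inner_apply hu, norm_sub_rev x] at hx
  rw [dist_eq_norm, dist_eq_norm, ← sq_eq_sq₀ (norm_nonneg _) (norm_nonneg _), norm_sub_rev y] at *
  linarith

theorem dist_apply_le_of_mul_inner_nonpos (hu : ‖u‖ = 1) {z x : EuclideanSpace ℝ (Fin n)}
    (h : inner ℝ z u * inner ℝ x u ≤ 0) : dist (reflHyp u z) x ≤ dist z x := by
  rw [dist_eq_norm, dist_eq_norm, ← sq_le_sq₀ (norm_nonneg _) (norm_nonneg _), norm_sub_sq hu]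
  linarith

end reflHyp

section

variable {n : ℕ} {u : EuclideanSpace ℝ (Fin n)}

theorem mem_polarSet_iff (hu : ‖u‖ = 1) {A : Set (EuclideanSpace ℝ (Fin n))}
    {x : EuclideanSpace ℝ (Fin n)} :
    x ∈ polarSet u A ↔ (x ∈ A ∨ reflHyp u x ∈ A) ∧ 0 ≤ inner ℝ x u ∨
      (x ∈ A ∧ reflHyp u x ∈ A) ∧ inner ℝ x u ≤ 0 := by
  rw [polarSet, (reflHyp.involutive hu).image_eq_preimage_symm]
  rfl

theorem polarSet_add_closedBall_subset (hu : ‖u‖ = 1) (A : Set (EuclideanSpace ℝ (Fin n)))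
    (r : ℝ) : polarSet u A + closedBall 0 r ⊆ polarSet u (A + closedBall 0 r) := by
  rintro _ ⟨x, hx, v, hv, rfl⟩
  set σ := reflHyp u
  set z := x + v
  have hzx : dist z x ≤ r := by simpa [z, dist_eq_norm] using hv
  have hσzσx : dist (σ z) (σ x) ≤ r := (reflHyp.dist_apply_apply hu z x).trans_le hzx
  have hσzx : dist (σ z) x = dist z (σ x) := by
    rw [← reflHyp.dist_apply_apply hu, reflHyp.involutive hu]
  rw [mem_polarSet_iff hu] at hx ⊢
  rcases le_total 0 (inner ℝ z u) with hz | hz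
  · refine Or.inl ⟨?_, hz⟩
    have hxA : x ∈ A ∨ σ x ∈ A := by tauto
    exact hxA.imp (mem_add_closedBall_zero_of_dist_le · hzx)
      (mem_add_closedBall_zero_of_dist_le · hσzσx)
  · refine Or.inr ⟨?_, hz⟩
    rcases hx with ⟨hxA, hx⟩ | ⟨⟨hxA, hσxA⟩, -⟩
    · have hσzx_le : dist (σ z) x ≤ r :=
        (reflHyp.dist_apply_le_of_mul_inner_nonpos hu (mul_nonpos_of_nonpos_of_nonneg hz hx)).trans
          hzx
      rcases hxA with hxA | hσxA
      · exact ⟨mem_add_closedBall_zero_of_dist_le hxA hzx,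
          mem_add_closedBall_zero_of_dist_le hxA hσzx_le⟩
      · exact ⟨mem_add_closedBall_zero_of_dist_le hσxA (hσzx ▸ hσzx_le),
          mem_add_closedBall_zero_of_dist_le hσxA hσzσx⟩
    · exact ⟨mem_add_closedBall_zero_of_dist_le hxA hzx,
        mem_add_closedBall_zero_of_dist_le hσxA hσzσx⟩

end

theorem polarSet_smoothing_general {n : ℕ} (u : EuclideanSpace ℝ (Fin n)) (hu : ‖u‖ = 1)
    (A : Set (EuclideanSpace ℝ (Fin n))) (r : ℝ) :
    polarSet u A + r • closedBall (0 : EuclideanSpace ℝ (Fin n)) 1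
      ⊆ polarSet u (A + r • closedBall (0 : EuclideanSpace ℝ (Fin n)) 1) := by
  rw [smul_closedBall r 0 zero_le_one, smul_zero]
  exact polarSet_add_closedBall_subset hu A _

/-- **Polarization is a smoothing transformation**: for every `r > 0`,
`A^σ + r·𝔹ⁿ ⊆ (A + r·𝔹ⁿ)^σ`, where `𝔹ⁿ` is the closed unit ball. -/
theorem polarSet_smoothing {n : ℕ} (u : EuclideanSpace ℝ (Fin n)) (hu : ‖u‖ = 1)
    (A : Set (EuclideanSpace ℝ (Fin n))) (r : ℝ) (hr : 0 < r) :
    polarSet u A + r • closedBall (0 : EuclideanSpace ℝ (Fin n)) 1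
      ⊆ polarSet u (A + r • closedBall (0 : EuclideanSpace ℝ (Fin n)) 1) :=
  polarSet_smoothing_general u hu A r
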